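/- Let M be an A-module algebra over a weak *-Hopf algebra A. Then A▷1_M = A_L▷1_M, and the map μ_▷ : A_L → M, a ↦ a▷1_M, is a unital algebra homomorphism onto M_R := A▷1_M which preserves the star: (ab)▷1_M = (a▷1_M)·(b▷1_M) and (a▷1_M)* = a*▷1_M for all a, b ∈ A_L. -/

import Mathlib

open scoped TensorProduct

noncomputable section

/-- The componentwise star operation on a tensor product of star algebras,
as an additive map (it is conjugate-linear, hence not a `LinearMap`). -/
def tensorStar (A B : Type) [Ring A] [Algebra ℂ A] [StarRing A] [StarModule ℂ A]
    [Ring B] [Algebra ℂ B] [StarRing B] [StarModule ℂ B] :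
    A ⊗[ℂ] B →+ A ⊗[ℂ] B :=
  TensorProduct.liftAddHom
    (AddMonoidHom.mk'
      (fun a => AddMonoidHom.mk' (fun b => star a ⊗ₜ[ℂ] star b)
        (fun x y => by
          show star a ⊗ₜ[ℂ] star (x + y) = star a ⊗ₜ[ℂ] star x + star a ⊗ₜ[ℂ] star y
          rw [star_add, TensorProduct.tmul_add]))
      (fun x y => by
        ext b
        show star (x + y) ⊗ₜ[ℂ] star b = star x ⊗ₜ[ℂ] star b + star y ⊗ₜ[ℂ] star b
        rw [star_add, TensorProduct.add_tmul]))
    (fun r a b => by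
      show star (r • a) ⊗ₜ[ℂ] star b = star a ⊗ₜ[ℂ] star (r • b)
      rw [star_smul, star_smul, TensorProduct.smul_tmul])

/-- A finite dimensional weak `*`-Hopf algebra over `ℂ` (axioms of [BNS]),
together with the derived properties of the antipode (which follow from the
axioms and are included as fields for convenience). -/
structure WeakHopfAlgebra (A : Type) [Ring A] [Algebra ℂ A] [StarRing A] [StarModule ℂ A] where
  Δ : A →ₗ[ℂ] A ⊗[ℂ] A
  ε : A →ₗ[ℂ] ℂ
  S : A →ₗ[ℂ] A
  Sinv : A →ₗ[ℂ] A
  finite : FiniteDimensional ℂ A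
  Δ_mul : ∀ x y : A, Δ (x * y) = Δ x * Δ y
  Δ_star : ∀ x : A, Δ (star x) = tensorStar A A (Δ x)
  coassoc : ∀ x : A,
    (TensorProduct.assoc ℂ A A A) ((TensorProduct.map Δ (LinearMap.id : A →ₗ[ℂ] A)) (Δ x))
      = (TensorProduct.map (LinearMap.id : A →ₗ[ℂ] A) Δ) (Δ x)
  counit_left : ∀ x : A,
    (TensorProduct.lid ℂ A) ((TensorProduct.map ε (LinearMap.id : A →ₗ[ℂ] A)) (Δ x)) = x
  counit_right : ∀ x : A,
    (TensorProduct.rid ℂ A) ((TensorProduct.map (LinearMap.id : A →ₗ[ℂ] A) ε) (Δ x)) = x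
  unit_weak :
    (Δ 1 ⊗ₜ[ℂ] (1 : A)) * ((TensorProduct.assoc ℂ A A A).symm ((1 : A) ⊗ₜ[ℂ] Δ 1))
      = (TensorProduct.map Δ (LinearMap.id : A →ₗ[ℂ] A)) (Δ 1)
  unit_weak' :
    ((TensorProduct.assoc ℂ A A A).symm ((1 : A) ⊗ₜ[ℂ] Δ 1)) * (Δ 1 ⊗ₜ[ℂ] (1 : A))
      = (TensorProduct.map Δ (LinearMap.id : A →ₗ[ℂ] A)) (Δ 1)
  counit_weak : ∀ x y z : A,
    ε (x * y * z) = (TensorProduct.lid ℂ ℂ)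
      ((TensorProduct.map (ε ∘ₗ LinearMap.mulLeft ℂ x) (ε ∘ₗ LinearMap.mulRight ℂ z)) (Δ y))
  counit_weak' : ∀ x y z : A,
    ε (x * y * z) = (TensorProduct.lid ℂ ℂ)
      ((TensorProduct.map (ε ∘ₗ LinearMap.mulRight ℂ z) (ε ∘ₗ LinearMap.mulLeft ℂ x)) (Δ y))
  antipode_left : ∀ x : A,
    LinearMap.mul' ℂ A ((TensorProduct.map S (LinearMap.id : A →ₗ[ℂ] A)) (Δ x))
      = (TensorProduct.rid ℂ A)
          ((TensorProduct.map (LinearMap.id : A →ₗ[ℂ] A) (ε ∘ₗ LinearMap.mulLeft ℂ x)) (Δ 1))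
  antipode_right : ∀ x : A,
    LinearMap.mul' ℂ A ((TensorProduct.map (LinearMap.id : A →ₗ[ℂ] A) S) (Δ x))
      = (TensorProduct.lid ℂ A)
          ((TensorProduct.map (ε ∘ₗ LinearMap.mulRight ℂ x) (LinearMap.id : A →ₗ[ℂ] A)) (Δ 1))
  antipode_mid : ∀ x : A,
    LinearMap.mul' ℂ A
      ((TensorProduct.map (LinearMap.mul' ℂ A ∘ₗ TensorProduct.map S (LinearMap.id : A →ₗ[ℂ] A)) S)
        ((TensorProduct.map Δ (LinearMap.id : A →ₗ[ℂ] A)) (Δ x))) = S x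
  S_Sinv : ∀ x : A, S (Sinv x) = x
  Sinv_S : ∀ x : A, Sinv (S x) = x
  S_antimul : ∀ x y : A, S (x * y) = S y * S x
  S_anticomul : ∀ x : A, Δ (S x) = (TensorProduct.comm ℂ A A) ((TensorProduct.map S S) (Δ x))
  S_star : ∀ x : A, star (S (star x)) = Sinv x

/-- The set of elements commuting with everything. -/
def centerSet (R : Type) [Mul R] : Set R := {z | ∀ r : R, z * r = r * z}

namespace WeakHopfAlgebra

variable {A : Type} [Ring A] [Algebra ℂ A] [StarRing A] [StarModule ℂ A]

/-- `Σ x₍₁₎ · S(x₍₂₎)`. -/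
def swIdS (W : WeakHopfAlgebra A) (x : A) : A :=
  LinearMap.mul' ℂ A ((TensorProduct.map (LinearMap.id : A →ₗ[ℂ] A) W.S) (W.Δ x))

/-- `Σ S(x₍₁₎) · x₍₂₎`. -/
def swSId (W : WeakHopfAlgebra A) (x : A) : A :=
  LinearMap.mul' ℂ A ((TensorProduct.map W.S (LinearMap.id : A →ₗ[ℂ] A)) (W.Δ x))

/-- `Σ x₍₂₎ · S⁻¹(x₍₁₎)`. -/
def swIdSinv (W : WeakHopfAlgebra A) (x : A) : A :=
  LinearMap.mul' ℂ A
    ((TensorProduct.map (LinearMap.id : A →ₗ[ℂ] A) W.Sinv) ((TensorProduct.comm ℂ A A) (W.Δ x)))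

/-- `Σ S⁻¹(x₍₂₎) · x₍₁₎`. -/
def swSinvId (W : WeakHopfAlgebra A) (x : A) : A :=
  LinearMap.mul' ℂ A
    ((TensorProduct.map W.Sinv (LinearMap.id : A →ₗ[ℂ] A)) ((TensorProduct.comm ℂ A A) (W.Δ x)))

/-- The left subalgebra `A_L = {(φ ⊗ id)(Δ 1) : φ ∈ A*}`. -/
def AL (W : WeakHopfAlgebra A) : Set A :=
  {a | ∃ φ : A →ₗ[ℂ] ℂ,
    a = (TensorProduct.lid ℂ A) ((TensorProduct.map φ (LinearMap.id : A →ₗ[ℂ] A)) (W.Δ 1))}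

/-- The right subalgebra `A_R = {(id ⊗ φ)(Δ 1) : φ ∈ A*}`. -/
def AR (W : WeakHopfAlgebra A) : Set A :=
  {a | ∃ φ : A →ₗ[ℂ] ℂ,
    a = (TensorProduct.rid ℂ A) ((TensorProduct.map (LinearMap.id : A →ₗ[ℂ] A) φ) (W.Δ 1))}

/-- A left integral: `a · l = Σ a₍₁₎ S(a₍₂₎) · l` for all `a`. -/
def IsLeftIntegral (W : WeakHopfAlgebra A) (l : A) : Prop := ∀ a : A, a * l = W.swIdS a * l

/-- A right integral: `r · a = r · Σ S(a₍₁₎) a₍₂₎` for all `a`. -/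
def IsRightIntegral (W : WeakHopfAlgebra A) (r : A) : Prop := ∀ a : A, r * a = r * W.swSId a

/-- A normalized Haar integral. -/
def IsHaar (W : WeakHopfAlgebra A) (h : A) : Prop :=
  W.IsLeftIntegral h ∧ W.IsRightIntegral h ∧ W.swSId h = 1 ∧ W.swIdS h = 1 ∧ W.S h = h

/-- The canonical left action of a functional `λ ∈ A*` on `A`:
`λ ⇀ a = Σ a₍₁₎ · ⟨λ, a₍₂₎⟩`. -/
def lact (W : WeakHopfAlgebra A) (lam : A →ₗ[ℂ] ℂ) : A →ₗ[ℂ] A :=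
  (TensorProduct.rid ℂ A).toLinearMap ∘ₗ
    (TensorProduct.map (LinearMap.id : A →ₗ[ℂ] A) lam) ∘ₗ W.Δ

/-- `λ ∈ A*` is a left integral of the dual weak Hopf algebra:
`λ ⇀ a ∈ A_L` for all `a ∈ A`. -/
def IsDualLeftIntegral (W : WeakHopfAlgebra A) (lam : A →ₗ[ℂ] ℂ) : Prop :=
  ∀ a : A, W.lact lam a ∈ W.AL

/-- A dual pair of left integrals `(l, λ)`. -/
def IsDualPair (W : WeakHopfAlgebra A) (l : A) (lam : A →ₗ[ℂ] ℂ) : Prop :=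
  W.IsLeftIntegral l ∧ W.IsDualLeftIntegral lam ∧
  W.lact lam l = 1 ∧
  (∀ a : A,
    (TensorProduct.rid ℂ A)
      ((TensorProduct.map (LinearMap.id : A →ₗ[ℂ] A) (lam ∘ₗ LinearMap.mulLeft ℂ a)) (W.Δ l))
      = W.S a) ∧
  (∀ a : A,
    (TensorProduct.lid ℂ A)
      ((TensorProduct.map (lam ∘ₗ LinearMap.mulRight ℂ a ∘ₗ W.Sinv)
        (LinearMap.id : A →ₗ[ℂ] A)) (W.Δ l)) = a)

end WeakHopfAlgebra

/-- A (left) module `*`-algebra over a weak `*`-Hopf algebra. -/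
structure ModuleAlgebra {A : Type} [Ring A] [Algebra ℂ A] [StarRing A] [StarModule ℂ A]
    (W : WeakHopfAlgebra A) (M : Type) [Ring M] [Algebra ℂ M] [StarRing M] [StarModule ℂ M] where
  act : A →ₗ[ℂ] M →ₗ[ℂ] M
  act_mul : ∀ (a b : A) (m : M), act (a * b) m = act a (act b m)
  act_one : ∀ m : M, act 1 m = m
  act_mul' : ∀ (a : A) (m n : M),
    act a (m * n) = LinearMap.mul' ℂ M ((TensorProduct.map (act.flip m) (act.flip n)) (W.Δ a))
  act_star : ∀ (a : A) (m : M), star (act a m) = act (star (W.S a)) (star m)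
  act_unit : ∀ a : A, act a 1 = act (W.swIdS a) 1

namespace ModuleAlgebra

variable {A : Type} [Ring A] [Algebra ℂ A] [StarRing A] [StarModule ℂ A]
variable {M : Type} [Ring M] [Algebra ℂ M] [StarRing M] [StarModule ℂ M]
variable {W : WeakHopfAlgebra A}

/-- `M_R = A ▷ 1_M`. -/
def MR (MA : ModuleAlgebra W M) : Set M := Set.range fun a : A => MA.act a 1

/-- The fixed point algebra `M^A`. -/
def fixed (MA : ModuleAlgebra W M) : Set M :=
  {n | ∀ (a : A) (m : M), MA.act a (m * n) = MA.act a m * n}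

end ModuleAlgebra

section Crossed

variable {A : Type} [Ring A] [Algebra ℂ A] [StarRing A] [StarModule ℂ A]
variable {M : Type} [Ring M] [Algebra ℂ M] [StarRing M] [StarModule ℂ M]
variable {W : WeakHopfAlgebra A}

/-- The subspace of `M ⊗ A` by which one divides to form the crossed product
`M ⋊ A = M ⊗_{A_L} A`. -/
def crossedRel (MA : ModuleAlgebra W M) : Submodule ℂ (M ⊗[ℂ] A) :=
  Submodule.span ℂ
    {x | ∃ (m : M) (a b : A), b ∈ W.AL ∧
      x = (m * MA.act b 1) ⊗ₜ[ℂ] a - m ⊗ₜ[ℂ] (b * a)}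

/-- The crossed product `M ⋊ A` as a vector space. -/
abbrev Crossed (MA : ModuleAlgebra W M) : Type := (M ⊗[ℂ] A) ⧸ crossedRel MA

/-- The canonical projection `M ⊗ A → M ⋊ A`; `cmk MA (m ⊗ₜ a)` is `m ⋊ a`. -/
def cmk (MA : ModuleAlgebra W M) : M ⊗[ℂ] A →ₗ[ℂ] Crossed MA := (crossedRel MA).mkQ

/-- The embedding `M → M ⋊ A`, `m ↦ m ⋊ 1`. -/
def iM (MA : ModuleAlgebra W M) : M →ₗ[ℂ] Crossed MA :=
  cmk MA ∘ₗ (TensorProduct.mk ℂ M A).flip (1 : A)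

/-- The map `A → M ⋊ A`, `a ↦ 1 ⋊ a`. -/
def iA (MA : ModuleAlgebra W M) : A →ₗ[ℂ] Crossed MA :=
  cmk MA ∘ₗ (TensorProduct.mk ℂ M A) (1 : M)

/-- The unit `1 ⋊ 1` of `M ⋊ A`. -/
def oneC (MA : ModuleAlgebra W M) : Crossed MA := cmk MA ((1 : M) ⊗ₜ[ℂ] (1 : A))

/-- The multiplication of the crossed product `M ⋊ A`
(whose existence is the content of Theorem 3.1), as a bundled bilinear map
together with its defining formula on generators:
`(m ⋊ a)(m' ⋊ a') = Σ m (a₍₁₎ ▷ m') ⋊ a₍₂₎ a'`. -/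
structure CrossedMul (MA : ModuleAlgebra W M) where
  mul : Crossed MA →ₗ[ℂ] Crossed MA →ₗ[ℂ] Crossed MA
  mul_def : ∀ (m m' : M) (a a' : A),
    mul (cmk MA (m ⊗ₜ[ℂ] a)) (cmk MA (m' ⊗ₜ[ℂ] a'))
      = cmk MA ((TensorProduct.map ((LinearMap.mulLeft ℂ m) ∘ₗ (MA.act.flip m'))
          (LinearMap.mulRight ℂ a')) (W.Δ a))

/-- The star operation of the crossed product `M ⋊ A`
(whose existence is part of Theorem 3.1):
`(m ⋊ a)* = Σ (a₍₁₎* ▷ m*) ⋊ a₍₂₎*`. -/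
structure CrossedStar (MA : ModuleAlgebra W M) where
  st : Crossed MA →+ Crossed MA
  st_smul : ∀ (c : ℂ) (x : Crossed MA), st (c • x) = (starRingEnd ℂ c) • st x
  st_def : ∀ (m : M) (a : A),
    st (cmk MA (m ⊗ₜ[ℂ] a))
      = cmk MA ((TensorProduct.map (MA.act.flip (star m)) (LinearMap.id : A →ₗ[ℂ] A))
          (W.Δ (star a)))

/-- The multiplication on `(M ⋊ A) ⊗ B` induced by a crossed product
multiplication on `M ⋊ A` and the algebra structure of `B`. -/
def mulT (MA : ModuleAlgebra W M) (CS : CrossedMul MA) (B : Type) [Ring B] [Algebra ℂ B] :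
    Crossed MA ⊗[ℂ] B →ₗ[ℂ] Crossed MA ⊗[ℂ] B →ₗ[ℂ] Crossed MA ⊗[ℂ] B :=
  TensorProduct.lift
    ((TensorProduct.mapBilinear (RingHom.id ℂ) (Crossed MA) B (Crossed MA) B).compl₁₂ CS.mul
      (LinearMap.mul ℂ B))

end Crossed

/-! For `x ∈ A_L` one has `Δ x = Δ(1)(x ⊗ 1)`, so the module-algebra axiom gives
`x ▷ m = (x ▷ 1) m`; this is multiplicativity. Every `a ▷ 1` equals `(a₍₁₎ S(a₍₂₎)) ▷ 1`
with `a₍₁₎ S(a₍₂₎) ∈ A_L`. For the star, `(a ▷ 1)* = S⁻¹(a*) ▷ 1`; now `S⁻¹` maps `A_L`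
into `A_R`, and for `y ∈ A_R` one has `Δ y = (1 ⊗ y)Δ(1)`, whence `y₍₁₎ S(y₍₂₎) = S(y)`,
so the unit axiom applied to `y = S⁻¹(a*)` returns `a* ▷ 1`. -/

open TensorProduct LinearMap

namespace TensorProduct

variable {R A B C : Type*} [CommSemiring R]

section Modules

variable [AddCommMonoid A] [Module R A] [AddCommMonoid B] [Module R B]
  [AddCommMonoid C] [Module R C]

lemma lid_map_assoc_tmul (φ : A →ₗ[R] R) (t : A ⊗[R] B) (c : C) :
    TensorProduct.lid R (B ⊗[R] C) (map φ id (TensorProduct.assoc R A B C (t ⊗ₜ c)))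
      = TensorProduct.lid R B (map φ id t) ⊗ₜ c := by
  induction t using TensorProduct.induction_on with
  | zero => simp
  | tmul a b => simp [smul_tmul']
  | add t t' ht ht' => simp [add_tmul, ht, ht']

lemma rid_map_assoc_symm_tmul (φ : C →ₗ[R] R) (a : A) (t : B ⊗[R] C) :
    TensorProduct.rid R (A ⊗[R] B) (map id φ ((TensorProduct.assoc R A B C).symm (a ⊗ₜ t)))
      = a ⊗ₜ TensorProduct.rid R B (map id φ t) := by
  induction t using TensorProduct.induction_on with
  | zero => simp
  | tmul b c => simp
  | add t t' ht ht' => simp [tmul_add, ht, ht']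

lemma map_lid_map (φ : A →ₗ[R] R) (g : B →ₗ[R] C) (t : A ⊗[R] B) :
    g (TensorProduct.lid R B (map φ id t)) = TensorProduct.lid R C (map φ id (map id g t)) := by
  induction t using TensorProduct.induction_on <;> simp_all

lemma map_rid_map (φ : B →ₗ[R] R) (g : A →ₗ[R] C) (t : A ⊗[R] B) :
    g (TensorProduct.rid R A (map id φ t)) = TensorProduct.rid R C (map id φ (map g id t)) := by
  induction t using TensorProduct.induction_on <;> simp_all

lemma lid_map_comm (φ : B →ₗ[R] R) (t : A ⊗[R] B) :
    TensorProduct.lid R A (map φ id (TensorProduct.comm R A B t))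
      = TensorProduct.rid R A (map id φ t) := by
  rw [map_comm, lid_comm]

end Modules

section Algebras

variable [Semiring A] [Algebra R A] [Semiring B] [Algebra R B]

lemma assoc_mul [Semiring C] [Algebra R C] (x y : (A ⊗[R] B) ⊗[R] C) :
    TensorProduct.assoc R A B C (x * y) =
      TensorProduct.assoc R A B C x * TensorProduct.assoc R A B C y :=
  map_mul (Algebra.TensorProduct.assoc R R R A B C) x y

lemma lid_map_one_tmul_mul (φ : A →ₗ[R] R) (b : B) (w : A ⊗[R] B) :
    TensorProduct.lid R B (map φ id ((1 ⊗ₜ b) * w)) =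
      b * TensorProduct.lid R B (map φ id w) := by
  induction w using TensorProduct.induction_on with
  | zero => simp
  | tmul x y => simp [Algebra.TensorProduct.tmul_mul_tmul]
  | add w w' hw hw' => simp [mul_add, hw, hw']

lemma rid_map_mul_tmul_one (φ : B →ₗ[R] R) (a : A) (w : A ⊗[R] B) :
    TensorProduct.rid R A (map id φ (w * (a ⊗ₜ 1))) =
      TensorProduct.rid R A (map id φ w) * a := by
  induction w using TensorProduct.induction_on with
  | zero => simp
  | tmul x y => simp [Algebra.TensorProduct.tmul_mul_tmul]
  | add w w' hw hw' => simp [add_mul, hw, hw']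

lemma map_mul_tmul_one {M N : Type*} [AddCommMonoid M] [Module R M]
    [AddCommMonoid N] [Module R N]
    (f : A →ₗ[R] M) (g : B →ₗ[R] N) (x : A) (t : A ⊗[R] B) :
    map f g (t * (x ⊗ₜ 1)) = map (f ∘ₗ mulRight R x) g t := by
  induction t using TensorProduct.induction_on with
  | zero => simp
  | tmul a b => simp [Algebra.TensorProduct.tmul_mul_tmul]
  | add t t' ht ht' => simp [add_mul, ht, ht']

lemma map_one_tmul_mul {M N : Type*} [AddCommMonoid M] [Module R M]
    [AddCommMonoid N] [Module R N]
    (f : A →ₗ[R] M) (g : B →ₗ[R] N) (y : B) (t : A ⊗[R] B) :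
    map f g ((1 ⊗ₜ y) * t) = map f (g ∘ₗ mulLeft R y) t := by
  induction t using TensorProduct.induction_on with
  | zero => simp
  | tmul a b => simp [Algebra.TensorProduct.tmul_mul_tmul]
  | add t t' ht ht' => simp [mul_add, ht, ht']

lemma mul'_map_mulRight_comp (f g : A →ₗ[R] B) (c : B) (t : A ⊗[R] A) :
    mul' R B (map f (mulRight R c ∘ₗ g) t) = mul' R B (map f g t) * c := by
  induction t using TensorProduct.induction_on with
  | zero => simp
  | tmul a b => simp [mul_assoc]
  | add t t' ht ht' => simp [add_mul, ht, ht']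

end Algebras

end TensorProduct

lemma star_lid_map {A B : Type} [Ring A] [Algebra ℂ A] [StarRing A] [StarModule ℂ A]
    [Ring B] [Algebra ℂ B] [StarRing B] [StarModule ℂ B] (φ : A →ₗ[ℂ] ℂ) (t : A ⊗[ℂ] B) :
    star (TensorProduct.lid ℂ B (map φ id t)) =
      TensorProduct.lid ℂ B (map (star (WithConv.toConv φ)).ofConv id (tensorStar A B t)) := by
  induction t using TensorProduct.induction_on with
  | zero => simp
  | tmul a b => simp [tensorStar]
  | add t t' ht ht' => simp [ht, ht']

namespace WeakHopfAlgebra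

variable {A : Type} [Ring A] [Algebra ℂ A] [StarRing A] [StarModule ℂ A] (W : WeakHopfAlgebra A)

lemma S_one : W.S 1 = 1 := by
  have hleft : ∀ y, W.S 1 * y = y := fun y => by
    rw [← W.S_Sinv y, ← W.S_antimul, mul_one]
  simpa using hleft 1

lemma swIdS_one : W.swIdS 1 = 1 := by
  rw [swIdS, W.antipode_right, mulRight_one, comp_id, W.counit_left]

lemma swIdS_mem_AL (x : A) : W.swIdS x ∈ W.AL :=
  ⟨W.ε ∘ₗ mulRight ℂ x, W.antipode_right x⟩

lemma comm_comul_one : TensorProduct.comm ℂ A A (W.Δ 1) = map W.S W.S (W.Δ 1) := by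
  conv_lhs => rw [← W.S_one, W.S_anticomul]
  simp

lemma comul_of_mem_AL {x : A} (hx : x ∈ W.AL) : W.Δ x = W.Δ 1 * (x ⊗ₜ 1) := by
  obtain ⟨φ, rfl⟩ := hx
  rw [map_lid_map, ← W.coassoc, ← W.unit_weak', assoc_mul, LinearEquiv.apply_symm_apply,
    lid_map_one_tmul_mul, lid_map_assoc_tmul]

lemma comul_of_mem_AR {y : A} (hy : y ∈ W.AR) : W.Δ y = (1 ⊗ₜ y) * W.Δ 1 := by
  obtain ⟨φ, rfl⟩ := hy
  rw [map_rid_map, ← W.unit_weak', rid_map_mul_tmul_one, rid_map_assoc_symm_tmul]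

lemma Sinv_mem_AR {b : A} (hb : b ∈ W.AL) : W.Sinv b ∈ W.AR := by
  obtain ⟨φ, rfl⟩ := hb
  have hSinvS : W.Sinv ∘ₗ W.S = LinearMap.id := LinearMap.ext W.Sinv_S
  have hSinv : map LinearMap.id W.Sinv (W.Δ 1)
      = TensorProduct.comm ℂ A A (map LinearMap.id W.S (W.Δ 1)) := by
    conv_lhs => rw [← comm_comm ℂ A A (W.Δ 1), comm_comul_one]
    rw [map_comm, map_map, hSinvS, id_comp]
  refine ⟨φ ∘ₗ W.S, ?_⟩
  rw [map_lid_map, hSinv, lid_map_comm, map_map, id_comp]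

lemma swIdS_of_mem_AR {y : A} (hy : y ∈ W.AR) : W.swIdS y = W.S y := by
  have hS : W.S ∘ₗ mulLeft ℂ y = mulRight ℂ (W.S y) ∘ₗ W.S :=
    LinearMap.ext fun x => W.S_antimul y x
  rw [swIdS, W.comul_of_mem_AR hy, map_one_tmul_mul, hS, mul'_map_mulRight_comp, ← swIdS,
    swIdS_one, one_mul]

lemma star_mem_AL {a : A} (ha : a ∈ W.AL) : star a ∈ W.AL := by
  obtain ⟨φ, rfl⟩ := ha
  refine ⟨(star (WithConv.toConv φ)).ofConv, ?_⟩
  have hΔ : tensorStar A A (W.Δ 1) = W.Δ 1 := by rw [← W.Δ_star, star_one]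
  rw [star_lid_map, hΔ]

end WeakHopfAlgebra

namespace ModuleAlgebra

variable {A M : Type} [Ring A] [Algebra ℂ A] [StarRing A] [StarModule ℂ A]
  [Ring M] [Algebra ℂ M] [StarRing M] [StarModule ℂ M]
  {W : WeakHopfAlgebra A} (MA : ModuleAlgebra W M)

lemma MR_eq_image_AL : MA.MR = (fun a : A => MA.act a 1) '' W.AL :=
  Set.Subset.antisymm
    (Set.range_subset_iff.2 fun a => ⟨W.swIdS a, W.swIdS_mem_AL a, (MA.act_unit a).symm⟩)
    (Set.image_subset_range _ _)

lemma act_of_mem_AL {x : A} (hx : x ∈ W.AL) (m : M) : MA.act x m = MA.act x 1 * m := by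
  have hflip : MA.act.flip 1 ∘ₗ mulRight ℂ x = MA.act.flip (MA.act x 1) :=
    LinearMap.ext fun a => MA.act_mul a x 1
  calc MA.act x m = MA.act x (1 * m) := by rw [one_mul]
    _ = mul' ℂ M (map (MA.act.flip 1) (MA.act.flip m) (W.Δ x)) := MA.act_mul' x 1 m
    _ = mul' ℂ M (map (MA.act.flip (MA.act x 1)) (MA.act.flip m) (W.Δ 1)) := by
      rw [W.comul_of_mem_AL hx, map_mul_tmul_one, hflip]
    _ = MA.act 1 (MA.act x 1 * m) := (MA.act_mul' 1 _ m).symm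
    _ = MA.act x 1 * m := MA.act_one _

lemma act_Sinv_one_of_mem_AL {b : A} (hb : b ∈ W.AL) : MA.act (W.Sinv b) 1 = MA.act b 1 := by
  rw [MA.act_unit, W.swIdS_of_mem_AR (W.Sinv_mem_AR hb), W.S_Sinv]

lemma act_star_one_of_mem_AL {a : A} (ha : a ∈ W.AL) :
    MA.act (star a) 1 = star (MA.act a 1) := by
  have hS : star (W.S a) = W.Sinv (star a) := by simpa using W.S_star (star a)
  rw [MA.act_star, star_one, hS, MA.act_Sinv_one_of_mem_AL (W.star_mem_AL ha)]

end ModuleAlgebra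

/-- Proposition 2.10 of [NSW]: `A ▷ 1_M = A_L ▷ 1_M`, and
`μ_▷ : A_L → M_R`, `a ↦ a ▷ 1_M`, is a unital star-preserving algebra
homomorphism onto `M_R`. -/
theorem mu_act_homomorphism
    {A M : Type} [Ring A] [Algebra ℂ A] [StarRing A] [StarModule ℂ A]
    [Ring M] [Algebra ℂ M] [StarRing M] [StarModule ℂ M]
    (W : WeakHopfAlgebra A) (MA : ModuleAlgebra W M) :
    MA.MR = (fun a : A => MA.act a 1) '' W.AL
    ∧ MA.act (1 : A) (1 : M) = 1
    ∧ (∀ a ∈ W.AL, ∀ b ∈ W.AL, MA.act (a * b) 1 = MA.act a 1 * MA.act b 1)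
    ∧ (∀ a ∈ W.AL, MA.act (star a) 1 = star (MA.act a 1)) :=
  ⟨MA.MR_eq_image_AL, MA.act_one 1,
    fun a ha b _ => by rw [MA.act_mul, MA.act_of_mem_AL ha],
    fun _ ha => MA.act_star_one_of_mem_AL ha⟩
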